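/- Let k ≥ 1, q ∈ ℚ and n ≥ 1. Then F^q_{k,n} satisfies the recursive formula F^q_{k,n} = s₁·F^q_{k,n−1} + s₂·F^q_{k,n−2} + ⋯ + s_{n−1}·F^q_{k,1} + s_n·F^q_{k,0}, where the recursion parameters are s_j = (1/n)·(j·q + n − j)·t_j for 1 ≤ j ≤ n (so in particular s_n = q·t_n). -/

import Mathlib

open Finset MvPolynomial

/-- The set of partitions `α ⊢ n` with parts at most `k`, encoded as tuples
`α = (α₁, …, α_k) ∈ ℕ^k` (0-indexed) with `∑ j, (j+1)·α_j = n`. -/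
def partitions (k n : ℕ) : Finset (Fin k → ℕ) :=
  (Fintype.piFinset fun _ : Fin k => Finset.range (n + 1)).filter
    fun α => ∑ j : Fin k, (j.1 + 1) * α j = n

/-- The variable `t_{m+1}` of `ℚ[t₁,…,t_k]` (0-indexed), with the convention
`t_j = 0` for `j > k`. -/
noncomputable def tQ (k m : ℕ) : MvPolynomial (Fin k) ℚ :=
  if h : m < k then X ⟨m, h⟩ else 0

/-- The Stirling operator of the first kind: `B q m = q(q+1)⋯(q+m-1)`, i.e.
`B q m = B_{m-1}(q)` in the paper's notation, with `B q 0 = B_{-1}(q) = 1`. -/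
def B (q : ℚ) (m : ℕ) : ℚ := ∏ i ∈ Finset.range m, (q + i)

/-- The `q`-th convolution root of the generalized Fibonacci polynomial:
`F^q_{k,n} = ∑_{α ⊢ n} (B_{|α|-1}(q) / (α₁!⋯α_k!)) · t^α`, with `F^q_{k,0} = 1`. -/
noncomputable def Fq (k : ℕ) (q : ℚ) (n : ℕ) : MvPolynomial (Fin k) ℚ :=
  if n = 0 then 1 else
    ∑ α ∈ partitions k n,
      C (B q (∑ j, α j) / ∏ j, ((α j).factorial : ℚ)) * ∏ j, X j ^ α j

/-! Comparing coefficients of `t^α`, the recursion says that for `α ⊢ n` the coefficient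
`c(α) = B_{|α|-1}(q) / α!` equals `∑_{i, α_i > 0} s_{i+1} c(α - e_i)`, since `t^α` arises as
`t_{i+1} · t^{α - e_i}` exactly when `α_i > 0`. As `c(α - e_i) = α_i B_{|α|-2}(q) / α!`, the right
side is `B_{|α|-2}(q) / α! · ∑_i s_{i+1} α_i`, and `∑_i (i+1) α_i = n` gives
`∑_i ((i+1) q + n - (i+1)) α_i = (q - 1) n + n |α|`. So `∑_i s_{i+1} α_i = q + |α| - 1`, the last
factor of `B_{|α|-1}(q)`. -/

section AddSingle

variable {ι : Type*} [DecidableEq ι]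

theorem sub_single_one_add_single_one {α : ι → ℕ} {i : ι} (h : 1 ≤ α i) :
    α - Pi.single i 1 + Pi.single i 1 = α :=
  tsub_add_cancel_of_le fun l => by by_cases hl : l = i <;> simp [hl, h]

variable [Fintype ι]

theorem sum_mul_add_single_one (w β : ι → ℕ) (i : ι) :
    ∑ l, w l * (β + Pi.single i 1 : ι → ℕ) l = ∑ l, w l * β l + w i := by
  simp [mul_add, sum_add_distrib, Pi.single_apply]

theorem prod_pow_add_single_one {M : Type*} [CommMonoid M] (x : ι → M) (β : ι → ℕ) (i : ι) :
    ∏ l, x l ^ (β + Pi.single i 1 : ι → ℕ) l = x i * ∏ l, x l ^ β l := by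
  simp only [Pi.add_apply, pow_add, prod_mul_distrib, Pi.single_apply, pow_ite, pow_one, pow_zero,
    prod_ite_eq', mem_univ, if_true, mul_comm]

theorem prod_factorial_add_single_one (β : ι → ℕ) (i : ι) :
    ∏ l, ((β + Pi.single i 1 : ι → ℕ) l).factorial = (β i + 1) * ∏ l, (β l).factorial := by
  rw [Fintype.prod_eq_mul_prod_compl i, Fintype.prod_eq_mul_prod_compl i (fun l => (β l).factorial)]
  simp +contextual [Pi.single_apply, Nat.factorial_succ, mul_assoc, prod_congr rfl]

end AddSingle

theorem B_succ (q : ℚ) (m : ℕ) : B q (m + 1) = B q m * (q + m) := prod_range_succ _ _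

def fqCoeff {ι : Type*} [Fintype ι] (q : ℚ) (α : ι → ℕ) : ℚ :=
  B q (∑ j, α j) / ∏ j, ((α j).factorial : ℚ)

theorem fqCoeff_sub_single_one {ι : Type*} [Fintype ι] [DecidableEq ι] (q : ℚ) {α : ι → ℕ}
    {i : ι} (h : 1 ≤ α i) :
    fqCoeff q (α - Pi.single i 1) = α i * B q (∑ l, α l - 1) / ∏ l, ((α l).factorial : ℚ) := by
  obtain ⟨β, rfl⟩ : ∃ β : ι → ℕ, β + Pi.single i 1 = α := ⟨_, sub_single_one_add_single_one h⟩
  have hsum := sum_mul_add_single_one 1 β i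
  have hfact := prod_factorial_add_single_one β i
  simp only [Pi.one_apply, one_mul] at hsum
  rw [add_tsub_cancel_right, hsum, Nat.add_sub_cancel, fqCoeff]
  rw_mod_cast [hfact]
  simp only [Pi.add_apply, Pi.single_eq_same]
  push_cast
  field_simp

theorem mul_le_of_sum_mul_eq {k n : ℕ} {α : Fin k → ℕ} (h : ∑ j : Fin k, (j.1 + 1) * α j = n)
    (i : Fin k) : (i.1 + 1) * α i ≤ n :=
  h ▸ single_le_sum (f := fun j : Fin k => (j.1 + 1) * α j) (fun _ _ => Nat.zero_le _) (mem_univ i)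

theorem mem_partitions {k n : ℕ} {α : Fin k → ℕ} :
    α ∈ partitions k n ↔ ∑ j : Fin k, (j.1 + 1) * α j = n :=
  mem_filter.trans <| and_iff_right_of_imp fun h => Fintype.mem_piFinset.2 fun j =>
    mem_range.2 (by nlinarith [mul_le_of_sum_mul_eq h j])

theorem partitions_zero (k : ℕ) : partitions k 0 = {0} := by
  ext α
  simp [mem_partitions, funext_iff]

theorem Fq_eq_sum (k : ℕ) (q : ℚ) (n : ℕ) :
    Fq k q n = ∑ α ∈ partitions k n, C (fqCoeff q α) * ∏ j, X j ^ α j := by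
  rcases Nat.eq_zero_or_pos n with rfl | hn
  · simp [Fq, partitions_zero, fqCoeff, B]
  · exact if_neg hn.ne'

def recParam (q : ℚ) (n j : ℕ) : ℚ := (j * q + n - j) / n

theorem sum_recParam_mul_eq {k n : ℕ} (q : ℚ) (hn : 1 ≤ n) {α : Fin k → ℕ}
    (hα : ∑ j : Fin k, (j.1 + 1) * α j = n) :
    ∑ i : Fin k, recParam q n (i.1 + 1) * α i
      = q + (∑ i, α i : ℕ) - 1 := by
  have hn' : (n : ℚ) ≠ 0 := by positivity
  have hα' : ∑ i : Fin k, ((i.1 + 1 : ℕ) : ℚ) * α i = n := by exact_mod_cast hα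
  have hexpand : ∀ i : Fin k, recParam q n (i.1 + 1) * α i
      = (q - 1) / n * (((i.1 + 1 : ℕ) : ℚ) * α i) + α i := fun i => by
    rw [recParam]
    field_simp
    ring
  simp only [hexpand, sum_add_distrib, ← mul_sum, hα']
  push_cast
  field_simp
  ring

theorem sum_recParam_mul_fqCoeff_sub_single_one {k n : ℕ} (q : ℚ) (hn : 1 ≤ n) {α : Fin k → ℕ}
    (hα : α ∈ partitions k n) :
    ∑ i ∈ univ with 1 ≤ α i, recParam q n (i.1 + 1) *
      fqCoeff q (α - Pi.single i 1) = fqCoeff q α := by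
  rw [mem_partitions] at hα
  set S := ∑ l, α l with hS
  have hS_pos : 1 ≤ S := by
    refine Nat.one_le_iff_ne_zero.2 fun h0 => ?_
    have hzero : ∀ l, α l = 0 := fun l => sum_eq_zero_iff.1 h0 l (mem_univ l)
    simp only [hzero, mul_zero, sum_const_zero] at hα
    omega
  calc _ = ∑ i ∈ univ with 1 ≤ α i, recParam q n (i.1 + 1) *
        α i * (B q (S - 1) / ∏ l, ((α l).factorial : ℚ)) :=
        sum_congr rfl fun i hi => by
          rw [fqCoeff_sub_single_one q (mem_filter.1 hi).2]
          ring
    _ = ∑ i, recParam q n (i.1 + 1) *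
        α i * (B q (S - 1) / ∏ l, ((α l).factorial : ℚ)) :=
        sum_filter_of_ne fun i _ hi => Nat.one_le_iff_ne_zero.2 fun h0 => hi (by simp [h0])
    _ = (q + (S - 1 : ℕ)) * (B q (S - 1) / ∏ l, ((α l).factorial : ℚ)) := by
        rw [← sum_mul, sum_recParam_mul_eq q hn hα, ← hS, Nat.cast_sub hS_pos]
        ring
    _ = fqCoeff q α := by
        rw [fqCoeff, ← hS, ← Nat.sub_add_cancel hS_pos, B_succ, Nat.add_sub_cancel]
        ring

theorem sum_partitions_add_single_one {M : Type*} [AddCommMonoid M] {k n : ℕ} (i : Fin k)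
    (hi : i.1 + 1 ≤ n) (f : (Fin k → ℕ) → M) :
    ∑ β ∈ partitions k (n - (i.1 + 1)), f (β + Pi.single i 1)
      = ∑ α ∈ partitions k n with 1 ≤ α i, f α := by
  have hwsum := sum_mul_add_single_one (fun j : Fin k => j.1 + 1)
  refine sum_nbij' (· + Pi.single i 1) (· - Pi.single i 1) (fun β hβ => ?_) (fun α hα => ?_)
    (fun β _ => add_tsub_cancel_right β _) (fun α hα => sub_single_one_add_single_one
      (mem_filter.1 hα).2) fun _ _ => rfl
  · rw [mem_partitions] at hβ
    rw [mem_filter, mem_partitions, hwsum, hβ]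
    simp only [Pi.add_apply, Pi.single_eq_same]
    omega
  · rw [mem_filter, mem_partitions] at hα
    rw [mem_partitions]
    have := hwsum (α - Pi.single i 1) i
    rw [sub_single_one_add_single_one hα.2] at this
    omega

theorem sum_Icc_tQ_mul {k n : ℕ} (f : ℕ → MvPolynomial (Fin k) ℚ) :
    ∑ j ∈ Icc 1 n, tQ k (j - 1) * f j = ∑ i ∈ univ with i.1 < n, X i * f (i.1 + 1) := by
  refine (sum_of_injOn (fun i : Fin k => i.1 + 1) (fun a _ b _ h => Fin.ext (by simpa using h))
    (fun i hi => ?_) (fun j hj hj' => ?_) (fun i _ => ?_)).symm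
  · exact mem_coe.2 (mem_Icc.2 ⟨Nat.le_add_left _ _, (mem_filter.1 (mem_coe.1 hi)).2⟩)
  · rw [mem_Icc] at hj
    have : ¬ j - 1 < k := fun h =>
      hj' ⟨⟨j - 1, h⟩, mem_coe.2 (mem_filter.2 ⟨mem_univ _, by dsimp only; omega⟩),
        by dsimp only; omega⟩
    simp [tQ, this]
  · simp [tQ]

theorem Fq_recursion_general (k n : ℕ) (hn : 1 ≤ n) (q : ℚ) :
    Fq k q n = ∑ j ∈ Finset.Icc 1 n,
      C (((j : ℚ) * q + (n : ℚ) - (j : ℚ)) / (n : ℚ)) * tQ k (j - 1) * Fq k q (n - j) := by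
  calc Fq k q n
      = ∑ α ∈ partitions k n, ∑ i ∈ univ with 1 ≤ α i,
          C (recParam q n (i.1 + 1) * fqCoeff q (α - Pi.single i 1)) * ∏ j, X j ^ α j := by
        rw [Fq_eq_sum]
        refine sum_congr rfl fun α hα => ?_
        rw [← sum_mul, ← map_sum, sum_recParam_mul_fqCoeff_sub_single_one q hn hα]
    _ = ∑ i ∈ univ with i.1 < n, ∑ α ∈ partitions k n with 1 ≤ α i,
          C (recParam q n (i.1 + 1) * fqCoeff q (α - Pi.single i 1)) * ∏ j, X j ^ α j := by
        refine sum_comm' fun α i => ?_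
        simp only [mem_filter, mem_univ, true_and]
        refine ⟨fun ⟨hα, hi⟩ => ⟨⟨hα, hi⟩, ?_⟩, And.left⟩
        nlinarith [mul_le_of_sum_mul_eq (mem_partitions.1 hα) i]
    _ = ∑ i ∈ univ with i.1 < n, X i * (C (recParam q n (i.1 + 1)) * Fq k q (n - (i.1 + 1))) := by
        refine sum_congr rfl fun i hi => ?_
        rw [Fq_eq_sum, mul_sum, mul_sum,
          ← sum_partitions_add_single_one i (by simpa using hi)]
        refine sum_congr rfl fun β _ => ?_
        rw [add_tsub_cancel_right, prod_pow_add_single_one, map_mul]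
        ring
    _ = ∑ j ∈ Icc 1 n, tQ k (j - 1) * (C (recParam q n j) * Fq k q (n - j)) :=
        (sum_Icc_tQ_mul fun j => C (recParam q n j) * Fq k q (n - j)).symm
    _ = _ := by
        refine sum_congr rfl fun j _ => ?_
        rw [mul_left_comm, ← mul_assoc, recParam]

theorem Fq_recursion (k n : ℕ) (hk : 1 ≤ k) (hn : 1 ≤ n) (q : ℚ) :
    Fq k q n = ∑ j ∈ Finset.Icc 1 n,
      C (((j : ℚ) * q + (n : ℚ) - (j : ℚ)) / (n : ℚ)) * tQ k (j - 1) * Fq k q (n - j) :=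
  Fq_recursion_general k n hn q
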